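/- Let X be a Lefschetz complex over a ring R with unity, let 𝒱 be a multivector field on X with X invariant, and let 𝓜 = {M_r : r ∈ ℙ} be a Morse decomposition of X. If I is an upper set in ℙ (i.e. r ≤ r′ and r ∈ I imply r′ ∈ I), then the Morse set M(I) is a repeller in X. -/
import Mathlib


open scoped Classical

namespace CMVF

variable {R : Type*} [Ring R] {X : Type*} [Fintype X]

/-- A Lefschetz complex over `R` with cells `X`. -/
structure Lefschetz (R : Type*) [Ring R] (X : Type*) [Fintype X] where
  dim : X → ℕ
  κ : X → X → R
  dim_facet : ∀ x y, κ x y ≠ 0 → dim x = dim y + 1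
  κ_sq : ∀ x z, (∑ y : X, κ x y * κ y z) = 0

namespace Lefschetz

variable (L : Lefschetz R X)

/-- The face order `y ≤κ x` : the partial order generated by the facet relation. -/
def le (y x : X) : Prop := Relation.ReflTransGen (fun a b => L.κ b a ≠ 0) y x

/-- Closure of a set of cells: all faces of cells of `A`. -/
def cls (A : Set X) : Set X := {z | ∃ a ∈ A, L.le z a}

/-- Closure of a single cell. -/
def clPt (x : X) : Set X := L.cls {x}

/-- The minimal open set containing `x`. -/
def opn (x : X) : Set X := {z | L.le x z}

/-- `A` is closed. -/
def Closed (A : Set X) : Prop := L.cls A = A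

/-- The mouth of `A`. -/
def mo (A : Set X) : Set X := L.cls A \ A

/-- `A` is proper: its mouth is closed. -/
def Proper (A : Set X) : Prop := L.Closed (L.mo A)

/-- Relative closure within an ambient subcomplex `W`. -/
def clsIn (W A : Set X) : Set X := L.cls A ∩ W

/-- Relative mouth within an ambient subcomplex `W`. -/
def moIn (W A : Set X) : Set X := L.clsIn W A \ A

/-- The boundary operator of the subcomplex determined by `A`
(`∂ x = ∑ y ∈ A, κ x y • y` for `x ∈ A`). -/
noncomputable def bd (A : Set X) : (X → R) →ₗ[R] (X → R) where
  toFun f := fun y => if y ∈ A then ∑ x : X, (if x ∈ A then f x * L.κ x y else 0) else 0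
  map_add' f g := by
    funext y
    by_cases hy : y ∈ A
    · simp only [hy, if_true, Pi.add_apply]
      rw [← Finset.sum_add_distrib]
      refine Finset.sum_congr rfl fun x _ => ?_
      by_cases hx : x ∈ A <;> simp [hx, add_mul]
    · simp [hy]
  map_smul' r f := by
    funext y
    by_cases hy : y ∈ A
    · simp only [hy, if_true, Pi.smul_apply, smul_eq_mul, RingHom.id_apply]
      rw [Finset.mul_sum]
      refine Finset.sum_congr rfl fun x _ => ?_
      by_cases hx : x ∈ A <;> simp [hx, mul_assoc]
    · simp [hy]

/-- The `n`-chains of the subcomplex determined by `A`. -/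
noncomputable def chainGroup (A : Set X) (n : ℕ) : Submodule R (X → R) :=
  Submodule.span R {f | ∃ x ∈ A, L.dim x = n ∧ f = Pi.single x 1}

/-- The `n`-cycles of the subcomplex determined by `A`. -/
noncomputable def cycles (A : Set X) (n : ℕ) : Submodule R (X → R) :=
  L.chainGroup A n ⊓ LinearMap.ker (L.bd A)

/-- The `n`-boundaries of the subcomplex determined by `A`. -/
noncomputable def boundaries (A : Set X) (n : ℕ) : Submodule R (X → R) :=
  (L.chainGroup A (n + 1)).map (L.bd A)

/-- The Lefschetz homology `H^κ_n(A)` of the subcomplex determined by `A`. -/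
noncomputable def homology (A : Set X) (n : ℕ) : Type _ :=
  (L.cycles A n) ⧸ ((L.boundaries A n).comap (L.cycles A n).subtype)

noncomputable instance homologyAddCommGroup (A : Set X) (n : ℕ) :
    AddCommGroup (L.homology A n) :=
  inferInstanceAs (AddCommGroup
    ((L.cycles A n) ⧸ ((L.boundaries A n).comap (L.cycles A n).subtype)))

noncomputable instance homologyModule (A : Set X) (n : ℕ) :
    Module R (L.homology A n) :=
  inferInstanceAs (Module R
    ((L.cycles A n) ⧸ ((L.boundaries A n).comap (L.cycles A n).subtype)))

/-- `A` is a zero space: its Lefschetz homology vanishes. -/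
def HomologyZero (A : Set X) : Prop := ∀ n, Subsingleton (L.homology A n)

/-- The Poincaré polynomial `p_A(t) = ∑ rank H^κ_n(A) tⁿ`. -/
noncomputable def poincare (A : Set X) : Polynomial ℕ :=
  ∑ n ∈ Finset.image L.dim Finset.univ,
    Polynomial.C (Module.finrank R (L.homology A n)) * Polynomial.X ^ n

/-- `V` is a multivector: proper, with a unique maximal element. -/
def IsMV (V : Set X) : Prop :=
  L.Proper V ∧ ∃! m, m ∈ V ∧ ∀ x ∈ V, L.le x m

/-- A regular multivector: one with vanishing Lefschetz homology. -/
def Regular (V : Set X) : Prop := L.HomologyZero V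

end Lefschetz

/-- A combinatorial multivector field on a Lefschetz complex: a partition into multivectors. -/
structure MVField {R : Type*} [Ring R] {X : Type*} [Fintype X] (L : Lefschetz R X) where
  mvs : Set (Set X)
  isMV : ∀ V ∈ mvs, L.IsMV V
  cover : ∀ x : X, ∃! V, V ∈ mvs ∧ x ∈ V

namespace MVField

variable {L : Lefschetz R X} (F : MVField L)

/-- `[x]` : the multivector containing `x`. -/
noncomputable def mclass (x : X) : Set X := (F.cover x).exists.choose

lemma mclass_spec (x : X) : F.mclass x ∈ F.mvs ∧ x ∈ F.mclass x :=
  (F.cover x).exists.choose_spec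

/-- `x★` : the dominant cell of the multivector containing `x`. -/
noncomputable def star (x : X) : X :=
  ((F.isMV _ (F.mclass_spec x).1).2).exists.choose

/-- `[x]°` : the regular part of the multivector of `x`. -/
noncomputable def regPart (x : X) : Set X :=
  if L.Regular (F.mclass x) then F.mclass x else F.mclass x \ {F.star x}

/-- The multivalued map `Π_𝒱`. -/
noncomputable def Pi (x : X) : Set X :=
  if x = F.star x then L.clPt x \ F.regPart x else {F.star x}

/-- The multivalued map of the multivector field restricted to the subcomplex `W`. -/
noncomputable def PiIn (W : Set X) (x : X) : Set X := F.Pi x ∩ W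

/-- `φ : ℤ → X` is a full solution of the multivector field restricted to `W`. -/
def IsSolIn (W : Set X) (φ : ℤ → X) : Prop := ∀ i, φ (i + 1) ∈ F.PiIn W (φ i)

/-- There is a full solution (of the field restricted to `W`) through `x` with values in `A`. -/
def FullSolThroughIn (W : Set X) (x : X) (A : Set X) : Prop :=
  ∃ φ : ℤ → X, F.IsSolIn W φ ∧ (∃ i, φ i = x) ∧ ∀ i, φ i ∈ A

/-- `A` is `𝒱`-compatible. -/
def Compat (A : Set X) : Prop := ∀ x ∈ A, F.mclass x ⊆ A

/-- `[A]⁻` : the maximal `𝒱`-compatible subset of `A`. -/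
def lowerC (A : Set X) : Set X := {x ∈ A | F.mclass x ⊆ A}

/-- `[A]⁺` : the minimal `𝒱`-compatible superset of `A`. -/
def upperC (A : Set X) : Set X := ⋃ x ∈ A, F.mclass x

/-- `Inv A`, the invariant part of `A`, computed in the subcomplex `W`. -/
def InvPartIn (W A : Set X) : Set X :=
  {x ∈ A | F.FullSolThroughIn W (F.star x) (F.lowerC A)}

/-- `A` is invariant (within the subcomplex `W`). -/
def InvariantIn (W A : Set X) : Prop := F.InvPartIn W A = A

/-- `φ` is a path (solution) on the integer interval `[a,b]`, within the subcomplex `W`. -/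
def IsPathOnIn (W : Set X) (a b : ℤ) (φ : ℤ → X) : Prop :=
  ∀ i, a ≤ i → i < b → φ (i + 1) ∈ F.PiIn W (φ i)

/-- `S` admits an internal tangency within the subcomplex `W`. -/
def HasInternalTangencyIn (W S : Set X) : Prop :=
  ∃ (a b : ℤ) (φ : ℤ → X), a ≤ b ∧ F.IsPathOnIn W a b φ ∧
    (∀ i, a ≤ i → i ≤ b → φ i ∈ L.clsIn W S) ∧ φ a ∈ S ∧ φ b ∈ S ∧
    ∃ i, a ≤ i ∧ i ≤ b ∧ φ i ∈ L.moIn W S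

/-- `S` is an isolated invariant set within the subcomplex `W`. -/
def IsoInvIn (W S : Set X) : Prop :=
  F.InvariantIn W S ∧ ¬ F.HasInternalTangencyIn W S

/-- `N` is a trapping region within the subcomplex `W`. -/
def TrappingIn (W N : Set X) : Prop :=
  N ⊆ W ∧ F.Compat N ∧ ∀ x ∈ N, F.PiIn W x ⊆ N

/-- `N` is a backward trapping region within the subcomplex `W`. -/
def BackTrappingIn (W N : Set X) : Prop :=
  N ⊆ W ∧ F.Compat N ∧ ∀ x ∈ W, ∀ y ∈ F.PiIn W x, y ∈ N → x ∈ N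

/-- `A` is an attractor within the subcomplex `W`. -/
def AttractorIn (W A : Set X) : Prop :=
  ∃ N, F.TrappingIn W N ∧ A = F.InvPartIn W N

/-- `A` is a repeller within the subcomplex `W`. -/
def RepellerIn (W A : Set X) : Prop :=
  ∃ N, F.BackTrappingIn W N ∧ A = F.InvPartIn W N

/-- The α-limit set of a full solution `φ`. -/
def alphaIn (W : Set X) (φ : ℤ → X) : Set X :=
  ⋂ k : ℕ, F.InvPartIn W (F.upperC (φ '' {i : ℤ | i ≤ -(k : ℤ)}))

/-- The ω-limit set of a full solution `φ`. -/
def omegaIn (W : Set X) (φ : ℤ → X) : Set X :=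
  ⋂ k : ℕ, F.InvPartIn W (F.upperC (φ '' {i : ℤ | (k : ℤ) ≤ i}))

/-- `C(A',A)` : the set of cells lying on connections running from `A'` to `A`. -/
def ConnIn (W A' A : Set X) : Set X :=
  {x | ∃ φ : ℤ → X, F.IsSolIn W φ ∧ (∃ i, φ i = F.star x) ∧
        F.alphaIn W φ ⊆ A' ∧ F.omegaIn W φ ⊆ A}

/-- `(A, Rp)` is an attractor-repeller pair in the subcomplex `W`. -/
def ARPairIn (W A Rp : Set X) : Prop :=
  F.AttractorIn W A ∧ F.RepellerIn W Rp ∧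
    A = F.InvPartIn W (W \ Rp) ∧ Rp = F.InvPartIn W (W \ A)

/-- `M` is a Morse decomposition of the subcomplex `W`, with admissible order `le`. -/
def MorseDecompIn (W : Set X) {P : Type*} [Finite P] (le : P → P → Prop)
    (M : P → Set X) : Prop :=
  IsPartialOrder P le ∧
  (∀ r, F.IsoInvIn W (M r)) ∧
  (∀ r r', r ≠ r' → Disjoint (M r) (M r')) ∧
  (∀ φ : ℤ → X, F.IsSolIn W φ →
    ∃ r r', le r r' ∧ F.alphaIn W φ ⊆ M r' ∧ F.omegaIn W φ ⊆ M r) ∧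
  (∀ φ : ℤ → X, F.IsSolIn W φ → ∀ r,
    F.alphaIn W φ ⊆ M r → F.omegaIn W φ ⊆ M r → Set.range φ ⊆ M r)

/-- The Morse set `M(I)` of a family of sets indexed by `I ⊆ P`. -/
def MorseSetIn (W : Set X) {P : Type*} (M : P → Set X) (I : Set P) : Set X :=
  ⋃ r ∈ I, ⋃ r' ∈ I, F.ConnIn W (M r') (M r)

/-- `(P₁, P₂)` is an index pair for the isolated invariant set `S`. -/
def IndexPair (S P₁ P₂ : Set X) : Prop :=
  L.Closed P₁ ∧ L.Closed P₂ ∧ P₂ ⊆ P₁ ∧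
  (∀ x ∈ P₂, ∀ y ∈ F.Pi x, y ∈ P₁ → y ∈ P₂) ∧
  (∀ x ∈ P₁, (∃ y ∈ F.Pi x, y ∉ P₁) → x ∈ P₂) ∧
  S = F.InvPartIn Set.univ (P₁ \ P₂)

/-- `x ⤳_A y` : there is a path of length at least two in `A` from `x★` to `y★`. -/
def PathConn (A : Set X) (x y : X) : Prop :=
  ∃ (a b : ℤ) (φ : ℤ → X), a < b ∧
    (∀ i, a ≤ i → i < b → φ (i + 1) ∈ F.Pi (φ i)) ∧
    (∀ i, a ≤ i → i ≤ b → φ i ∈ A) ∧ φ a = F.star x ∧ φ b = F.star y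

/-- The chain recurrent set. -/
def CR : Set X := {x | F.PathConn Set.univ x x}

/-- `B` is a basic set: an equivalence class of mutual connectedness in `CR`. -/
def IsBasicSet (B : Set X) : Prop :=
  ∃ x ∈ F.CR, B = {y ∈ F.CR | F.PathConn Set.univ x y ∧ F.PathConn Set.univ y x}

/-- The set `E_P` of cells of `P₁` all of whose forward solutions meet `P₂`. -/
def Ep (P₁ P₂ : Set X) : Set X :=
  {x ∈ P₁ | ∀ φ : ℕ → X, φ 0 = x → (∀ i, φ (i + 1) ∈ F.Pi (φ i)) → ∃ i, φ i ∈ P₂}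

/-- The preorder `≤_𝒱` induced by the arrows of the multivector field. -/
def leV : X → X → Prop := Relation.ReflTransGen (fun y x => y ∈ F.Pi x)

/-- The multivector field is acyclic: `≤_𝒱` is a partial order. -/
def Acyclic : Prop := ∀ x y, F.leV x y → F.leV y x → x = y

end MVField

end CMVF

open CMVF

variable {R : Type*} [Ring R] {X : Type*} [Fintype X]

namespace CMVF
namespace MVField

variable {R : Type*} [Ring R] {X : Type*} [Fintype X] {L : Lefschetz R X} (F : MVField L)

lemma mclass_eq_of_mem {x y : X} (hy : y ∈ F.mclass x) : F.mclass y = F.mclass x :=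
  (F.cover y).unique ⟨(F.mclass_spec y).1, (F.mclass_spec y).2⟩ ⟨(F.mclass_spec x).1, hy⟩

lemma star_spec (x : X) :
    F.star x ∈ F.mclass x ∧ ∀ z ∈ F.mclass x, L.le z (F.star x) :=
  ((F.isMV _ (F.mclass_spec x).1).2).exists.choose_spec

lemma star_eq_of_mem {x y : X} (hy : y ∈ F.mclass x) : F.star y = F.star x := by
  have hV := F.mclass_eq_of_mem hy
  refine ((F.isMV _ (F.mclass_spec x).1).2).unique ?_ (F.star_spec x)
  have h := F.star_spec y
  rw [hV] at h
  exact h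

lemma star_star (x : X) : F.star (F.star x) = F.star x :=
  F.star_eq_of_mem (F.star_spec x).1

lemma piIn_univ (x : X) : F.PiIn Set.univ x = F.Pi x := by
  simp [PiIn]

lemma pi_of_ne {x : X} (h : x ≠ F.star x) : F.Pi x = {F.star x} := by
  simp [Pi, h]

lemma sol_shift {φ : ℤ → X} (hφ : F.IsSolIn Set.univ φ) (t : ℤ) :
    F.IsSolIn Set.univ (fun i => φ (i + t)) := by
  intro i
  show φ (i + 1 + t) ∈ F.PiIn Set.univ (φ (i + t))
  have e : i + 1 + t = (i + t) + 1 := by ring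
  rw [e]
  exact hφ (i + t)

lemma sol_star_mem {φ : ℤ → X} (hφ : F.IsSolIn Set.univ φ) (i : ℤ) :
    ∃ j, φ j = F.star (φ i) := by
  by_cases h : φ i = F.star (φ i)
  · exact ⟨i, h⟩
  · have h2 := hφ i
    rw [F.piIn_univ, F.pi_of_ne h] at h2
    exact ⟨i + 1, h2⟩

lemma lowerC_mono {A B : Set X} (h : A ⊆ B) : F.lowerC A ⊆ F.lowerC B :=
  fun x hx => ⟨h hx.1, hx.2.trans h⟩

lemma invPart_subset (W A : Set X) : F.InvPartIn W A ⊆ A := fun _ hx => hx.1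

lemma invPart_mono (W : Set X) {A B : Set X} (h : A ⊆ B) :
    F.InvPartIn W A ⊆ F.InvPartIn W B := by
  rintro x ⟨hxA, φ, hsol, hi, hvals⟩
  exact ⟨h hxA, φ, hsol, hi, fun i => F.lowerC_mono h (hvals i)⟩

lemma mem_upperC {A : Set X} {a : X} (ha : a ∈ A) : a ∈ F.upperC A :=
  Set.mem_biUnion ha (F.mclass_spec a).2

lemma upperC_mono {A B : Set X} (h : A ⊆ B) : F.upperC A ⊆ F.upperC B := by
  intro x hx
  rw [upperC, Set.mem_iUnion₂] at hx ⊢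
  obtain ⟨a, ha, hm⟩ := hx
  exact ⟨a, h ha, hm⟩

lemma upperC_eq_of_compat {A : Set X} (h : F.Compat A) : F.upperC A = A := by
  refine subset_antisymm ?_ (fun a ha => F.mem_upperC ha)
  intro x hx
  rw [upperC, Set.mem_iUnion₂] at hx
  obtain ⟨a, ha, hm⟩ := hx
  exact h a ha hm

lemma lowerC_eq_of_compat {A : Set X} (h : F.Compat A) : F.lowerC A = A :=
  subset_antisymm (fun _ hx => hx.1) (fun x hx => ⟨hx, h x hx⟩)

lemma mem_lowerC_upperC {A : Set X} {a : X} (ha : a ∈ A) : a ∈ F.lowerC (F.upperC A) :=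
  ⟨F.mem_upperC ha, fun z hz => Set.mem_biUnion ha hz⟩

lemma compat_invPart (W A : Set X) : F.Compat (F.InvPartIn W A) := by
  intro x hx z hz
  obtain ⟨hxA, φ, hsol, hi, hvals⟩ := hx
  have hst : F.star x ∈ F.lowerC A := by
    obtain ⟨i, hi'⟩ := hi
    rw [← hi']
    exact hvals i
  have hcls : F.mclass (F.star x) = F.mclass x := F.mclass_eq_of_mem (F.star_spec x).1
  have hzA : z ∈ A := by
    have h2 := hst.2
    rw [hcls] at h2
    exact h2 hz
  have hstz : F.star z = F.star x := F.star_eq_of_mem hz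
  exact ⟨hzA, φ, hsol, by rw [hstz]; exact hi, hvals⟩

end MVField
end CMVF
namespace CMVF
namespace MVField

variable {R : Type*} [Ring R] {X : Type*} [Fintype X] {L : Lefschetz R X} (F : MVField L)

lemma omega_tail {φ ψ : ℤ → X} {c d : ℤ} (h : ∀ i, c ≤ i → φ i = ψ (i + d)) :
    F.omegaIn Set.univ φ ⊆ F.omegaIn Set.univ ψ := by
  intro w hw
  rw [omegaIn, Set.mem_iInter] at hw ⊢
  intro k
  set k' : ℕ := (max c ((k : ℤ) - d)).toNat with hk'
  have hself := Int.self_le_toNat (max c ((k : ℤ) - d))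
  have hk'c : c ≤ (k' : ℤ) := le_trans (le_max_left _ _) hself
  have hk'k : (k : ℤ) ≤ (k' : ℤ) + d := by
    have := le_trans (le_max_right c ((k:ℤ) - d)) hself
    omega
  refine F.invPart_mono _ (F.upperC_mono ?_) (hw k')
  rintro x ⟨i, hi, rfl⟩
  simp only [Set.mem_setOf_eq] at hi
  exact ⟨i + d, by simp only [Set.mem_setOf_eq]; omega, (h i (le_trans hk'c hi)).symm⟩

lemma alpha_head {φ : ℤ → X} {B : Set X} (hc : F.Compat B) (h : ∀ i ≤ (0:ℤ), φ i ∈ B) :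
    F.alphaIn Set.univ φ ⊆ B := by
  intro w hw
  rw [alphaIn, Set.mem_iInter] at hw
  have h1 : φ '' {i : ℤ | i ≤ -((0:ℕ):ℤ)} ⊆ B := by
    rintro x ⟨i, hi, rfl⟩
    exact h i (by simpa using hi)
  have h2 := F.upperC_mono h1 (F.invPart_subset _ _ (hw 0))
  rwa [F.upperC_eq_of_compat hc] at h2

lemma glue_shared {σ ψ : ℤ → X} (hσ : F.IsSolIn Set.univ σ) (hψ : F.IsSolIn Set.univ ψ)
    (h0 : σ 0 = ψ 0) :
    ∃ χ : ℤ → X, F.IsSolIn Set.univ χ ∧ (∀ i, i ≤ (0:ℤ) → χ i = σ i) ∧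
      ∀ i, (0:ℤ) ≤ i → χ i = ψ i := by
  refine ⟨fun i => if i ≤ 0 then σ i else ψ i, ?_, fun i hi => if_pos hi, ?_⟩
  · intro i
    show (if i + 1 ≤ 0 then σ (i+1) else ψ (i+1)) ∈ F.PiIn Set.univ (if i ≤ 0 then σ i else ψ i)
    split_ifs with h1 h2 h2
    · exact hσ i
    · have : i = 0 := by omega
      subst this
      rw [h0]
      exact hψ 0
    · omega
    · exact hψ i
  · intro i hi
    by_cases h : i ≤ 0
    · have : i = 0 := le_antisymm h hi
      subst this
      simpa using h0
    · exact if_neg h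

lemma glue_step {σ ψ : ℤ → X} (hσ : F.IsSolIn Set.univ σ) (hψ : F.IsSolIn Set.univ ψ)
    {y : X} (hy : y ∈ F.Pi (σ 0)) (h0 : ψ 0 = F.star y) :
    ∃ (χ : ℤ → X) (c : ℤ), F.IsSolIn Set.univ χ ∧ χ 0 = σ 0 ∧
      ∀ i, c ≤ i → χ i = ψ (i - c) := by
  by_cases hys : y = F.star y
  · refine ⟨fun i => if i ≤ 0 then σ i else ψ (i - 1), 1, ?_, by simp, fun i hi => by
      simp only [if_neg (show ¬ i ≤ 0 by omega)]⟩
    intro i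
    show (if i + 1 ≤ 0 then σ (i+1) else ψ (i+1-1)) ∈
      F.PiIn Set.univ (if i ≤ 0 then σ i else ψ (i-1))
    split_ifs with h1 h2 h2
    · exact hσ i
    · have : i = 0 := by omega
      subst this
      have e : (0:ℤ) + 1 - 1 = 0 := by ring
      rw [e, F.piIn_univ, h0, ← hys]
      exact hy
    · omega
    · have e : i + 1 - 1 = (i - 1) + 1 := by ring
      rw [e]
      exact hψ (i - 1)
  · refine ⟨fun i => if i ≤ 0 then σ i else if i = 1 then y else ψ (i - 2), 2, ?_, by simp,
      fun i hi => by
        simp only [if_neg (show ¬ i ≤ 0 by omega), if_neg (show ¬ i = 1 by omega)]⟩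
    intro i
    show (if i + 1 ≤ 0 then σ (i+1) else if i + 1 = 1 then y else ψ (i+1-2)) ∈
      F.PiIn Set.univ (if i ≤ 0 then σ i else if i = 1 then y else ψ (i-2))
    rcases (show i + 1 ≤ 0 ∨ i = 0 ∨ i = 1 ∨ 2 ≤ i by omega) with h | h | h | h
    · have hi0 : i ≤ 0 := by omega
      rw [if_pos h, if_pos hi0]
      exact hσ i
    · subst h
      norm_num
      rw [F.piIn_univ]
      exact hy
    · subst h
      norm_num
      rw [F.piIn_univ, F.pi_of_ne hys, h0]
      rfl
    · rw [if_neg (show ¬ i + 1 ≤ 0 by omega), if_neg (show ¬ i + 1 = 1 by omega),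
        if_neg (show ¬ i ≤ 0 by omega), if_neg (show ¬ i = 1 by omega)]
      have e : i + 1 - 2 = (i - 2) + 1 := by ring
      rw [e]
      exact hψ (i - 2)

end MVField
end CMVF
namespace CMVF
namespace MVField

variable {R : Type*} [Ring R] {X : Type*} [Fintype X] {L : Lefschetz R X} (F : MVField L)

lemma omega_nonempty {φ : ℤ → X} (hφ : F.IsSolIn Set.univ φ) :
    (F.omegaIn Set.univ φ).Nonempty := by
  classical
  set V : Set X := {v | ∀ k : ℤ, ∃ i, k ≤ i ∧ φ i = v} with hV
  have hchoice : ∀ v : X, ∃ k : ℤ, v ∈ V ∨ ∀ i, k ≤ i → φ i ≠ v := by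
    intro v
    by_cases hv : v ∈ V
    · exact ⟨0, Or.inl hv⟩
    · rw [hV, Set.mem_setOf_eq] at hv
      push_neg at hv
      obtain ⟨k, hk⟩ := hv
      exact ⟨k, Or.inr fun i hi => hk i hi⟩
  choose g hg using hchoice
  have hne : (Finset.univ : Finset X).Nonempty := ⟨φ 0, Finset.mem_univ _⟩
  set m : ℤ := Finset.univ.sup' hne g with hm
  have hmem : ∀ i : ℤ, m ≤ i → φ i ∈ V := by
    intro i hi
    rcases hg (φ i) with h | h
    · exact h
    · exact absurd rfl (h i (le_trans (Finset.le_sup' g (Finset.mem_univ _)) hi))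
  obtain ⟨i1, i2, hi1, hlt, heq2⟩ : ∃ i1 i2 : ℤ, m ≤ i1 ∧ i1 < i2 ∧ φ i1 = φ i2 := by
    obtain ⟨a, b, hab, h⟩ := Fintype.exists_ne_map_eq_of_card_lt
      (fun n : Fin (Fintype.card X + 1) => φ (m + (n : ℕ))) (by simp)
    rcases lt_or_gt_of_ne hab with hl | hl
    · have hl' : (a : ℕ) < (b : ℕ) := hl
      exact ⟨m + (a : ℕ), m + (b : ℕ), by omega, by omega, h⟩
    · have hl' : (b : ℕ) < (a : ℕ) := hl
      exact ⟨m + (b : ℕ), m + (a : ℕ), by omega, by omega, h.symm⟩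
  set p : ℤ := i2 - i1 with hp
  have hppos : 0 < p := by omega
  set τ : ℤ → X := fun j => φ (i1 + j % p) with hτ
  have hτval : ∀ j : ℤ, ∃ i : ℤ, m ≤ i ∧ τ j = φ i := by
    intro j
    refine ⟨i1 + j % p, ?_, rfl⟩
    have := Int.emod_nonneg j (ne_of_gt hppos)
    omega
  have hτV : ∀ j, τ j ∈ V := by
    intro j
    obtain ⟨i, hi, he⟩ := hτval j
    rw [he]
    exact hmem i hi
  have hτsol : F.IsSolIn Set.univ τ := by
    intro j
    have h1 : 0 ≤ j % p := Int.emod_nonneg j (ne_of_gt hppos)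
    have h2 : j % p < p := Int.emod_lt_of_pos j hppos
    have hstep := hφ (i1 + j % p)
    have hkey : τ (j + 1) = φ (i1 + j % p + 1) := by
      show φ (i1 + (j + 1) % p) = φ (i1 + j % p + 1)
      have hde := Int.mul_ediv_add_emod j p
      have e : j + 1 = (j % p + 1) + p * (j / p) := by linarith
      rw [e, Int.add_mul_emod_self_left]
      rcases eq_or_lt_of_le (show j % p + 1 ≤ p by omega) with he | he
      · rw [he, Int.emod_self, add_zero, heq2]
        congr 1
        omega
      · rw [Int.emod_eq_of_lt (by omega) he]
        congr 1
        ring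
    rw [hkey]
    show _ ∈ F.PiIn Set.univ (φ (i1 + j % p))
    exact hstep
  refine ⟨φ i1, ?_⟩
  rw [omegaIn, Set.mem_iInter]
  intro k
  have hSmem : ∀ j, τ j ∈ φ '' {i : ℤ | (k:ℤ) ≤ i} := by
    intro j
    obtain ⟨i', hi', he⟩ := hτV j (k : ℤ)
    exact ⟨i', hi', he⟩
  have hx0S : φ i1 ∈ φ '' {i : ℤ | (k:ℤ) ≤ i} := by
    obtain ⟨i', hi', he⟩ := hmem i1 hi1 (k : ℤ)
    exact ⟨i', hi', he⟩
  refine ⟨F.mem_upperC hx0S, τ, hτsol, ?_, fun j => F.mem_lowerC_upperC (hSmem j)⟩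
  have hτ0 : τ 0 = φ i1 := by
    show φ (i1 + 0 % p) = φ i1
    rw [Int.zero_emod, add_zero]
  obtain ⟨j, hj⟩ := F.sol_star_mem hτsol 0
  rw [hτ0] at hj
  exact ⟨j, hj⟩

end MVField
end CMVF
namespace CMVF
namespace MVField

variable {R : Type*} [Ring R] {X : Type*} [Fintype X] {L : Lefschetz R X}

/-- The repelling neighborhood: cells whose star admits a solution whose ω-limit lies in `M(I)`. -/
def RepN (F : MVField L) {P : Type*} (M : P → Set X) (I : Set P) : Set X :=
  {x | ∃ φ : ℤ → X, F.IsSolIn Set.univ φ ∧ (∃ i, φ i = F.star x) ∧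
    ∃ r ∈ I, F.omegaIn Set.univ φ ⊆ M r}

variable (F : MVField L) {P : Type*} {M : P → Set X} {I : Set P}

lemma repN_star {x y : X} (he : F.star x = F.star y) (hx : x ∈ F.RepN M I) :
    y ∈ F.RepN M I := by
  obtain ⟨φ, h1, ⟨i, hi⟩, h3⟩ := hx
  exact ⟨φ, h1, ⟨i, by rw [hi, he]⟩, h3⟩

lemma repN_compat : F.Compat (F.RepN M I) := by
  intro x hx z hz
  exact F.repN_star (F.star_eq_of_mem hz).symm hx

end MVField
end CMVF
/-- Theorem: if `I` is an upper set in `ℙ`, then the Morse set `M(I)` is a repeller. -/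
theorem morse_set_repeller (L : Lefschetz R X) (F : MVField L)
    (hX : F.InvariantIn Set.univ Set.univ)
    {P : Type*} [Finite P] (le : P → P → Prop) (M : P → Set X)
    (hM : F.MorseDecompIn Set.univ le M) (I : Set P)
    (hI : ∀ r r', le r r' → r ∈ I → r' ∈ I) :
    F.RepellerIn Set.univ (F.MorseSetIn Set.univ M I) := by
  classical
  obtain ⟨hpo, hiso, hdisj, hconn, hrange⟩ := hM
  set N : Set X := F.RepN M I with hNdef
  have hNcompat : F.Compat N := F.repN_compat
  have hMinv : ∀ r, F.InvPartIn Set.univ (M r) = M r := fun r => (hiso r).1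
  have hMcompat : ∀ r, F.Compat (M r) := fun r => by
    rw [← hMinv r]; exact F.compat_invPart _ _
  -- key : a cell of `M r` lying in `N` forces `r ∈ I`
  have hkey : ∀ r z, z ∈ M r → z ∈ N → r ∈ I := by
    intro r z hzM hzN
    obtain ⟨ψ, hψsol, ⟨j0, hj0⟩, s, hsI, hψω⟩ := hzN
    have hz' : z ∈ F.InvPartIn Set.univ (M r) := by rw [hMinv]; exact hzM
    obtain ⟨-, σ, hσsol, ⟨i0, hi0⟩, hσval⟩ := hz'
    have hstarM : F.star z ∈ M r := by
      have h := hσval i0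
      rw [hi0] at h
      exact h.1
    obtain ⟨χ, hχsol, hχneg, hχpos⟩ := F.glue_shared (F.sol_shift hσsol i0)
      (F.sol_shift hψsol j0)
      (show σ (0 + i0) = ψ (0 + j0) by rw [zero_add, zero_add, hi0, hj0])
    have hχα : F.alphaIn Set.univ χ ⊆ M r := by
      apply F.alpha_head (hMcompat r)
      intro i hi
      rw [hχneg i hi]
      exact (hσval (i + i0)).1
    have hχω : F.omegaIn Set.univ χ ⊆ M s := by
      refine subset_trans (F.omega_tail (ψ := ψ) (c := 0) (d := j0) ?_) hψω
      intro i hi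
      exact hχpos i hi
    obtain ⟨w, hw⟩ := F.omega_nonempty hχsol
    obtain ⟨t, t', htt', hα, hω⟩ := hconn χ hχsol
    have hts : t = s := by
      by_contra hne
      exact (Set.disjoint_left.mp (hdisj t s hne)) (hω hw) (hχω hw)
    by_cases hαe : (F.alphaIn Set.univ χ).Nonempty
    · obtain ⟨w', hw'⟩ := hαe
      have ht'r : t' = r := by
        by_contra hne
        exact (Set.disjoint_left.mp (hdisj t' r hne)) (hα hw') (hχα hw')
      exact hI s r (by rw [← hts, ← ht'r]; exact htt') hsI
    · have hαs : F.alphaIn Set.univ χ ⊆ M s := by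
        rw [Set.not_nonempty_iff_eq_empty] at hαe
        rw [hαe]
        exact Set.empty_subset _
      have hr' := hrange χ hχsol s hαs hχω
      have hχ0 : χ 0 = F.star z := by
        rw [hχpos 0 le_rfl]
        show ψ (0 + j0) = _
        rw [zero_add, hj0]
      have hstarMs : F.star z ∈ M s := by
        rw [← hχ0]
        exact hr' (Set.mem_range_self 0)
      have hrs : r = s := by
        by_contra hne
        exact (Set.disjoint_left.mp (hdisj r s hne)) hstarM hstarMs
      rw [hrs]
      exact hsI
  -- backward trapping
  have hback : ∀ x, ∀ y ∈ F.PiIn Set.univ x, y ∈ N → x ∈ N := by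
    intro x y hy hyN
    rw [F.piIn_univ] at hy
    by_cases hx : x = F.star x
    · obtain ⟨ψ, hψsol, ⟨j0, hj0⟩, s, hsI, hψω⟩ := hyN
      have hxinv : x ∈ F.InvPartIn Set.univ Set.univ := by
        rw [hX]; trivial
      obtain ⟨-, σ, hσsol, ⟨i0, hi0⟩, -⟩ := hxinv
      have hσ0 : σ (0 + i0) = x := by rw [zero_add, hi0, ← hx]
      obtain ⟨χ, c, hχsol, hχ0, hχtail⟩ := F.glue_step (F.sol_shift hσsol i0)
        (F.sol_shift hψsol j0) (y := y) (by rw [hσ0]; exact hy)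
        (show ψ (0 + j0) = F.star y by rw [zero_add, hj0])
      refine ⟨χ, hχsol, ⟨0, by rw [hχ0, hσ0]; exact hx⟩, s, hsI, ?_⟩
      refine subset_trans (F.omega_tail (ψ := ψ) (c := c) (d := j0 - c) ?_) hψω
      intro i hi
      rw [hχtail i hi]
      show ψ (i - c + j0) = ψ (i + (j0 - c))
      congr 1
      ring
    · rw [F.pi_of_ne hx] at hy
      exact F.repN_star (x := y) (by rw [hy, F.star_star]) hyN
  -- the two inclusions
  have hsub1 : F.MorseSetIn Set.univ M I ⊆ F.InvPartIn Set.univ N := by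
    intro x hx
    rw [MVField.MorseSetIn] at hx
    simp only [Set.mem_iUnion] at hx
    obtain ⟨r, hrI, r', hr'I, φ, hφsol, hφi, hφα, hφω⟩ := hx
    have hxN : x ∈ N := ⟨φ, hφsol, hφi, r, hrI, hφω⟩
    refine ⟨hxN, φ, hφsol, hφi, fun j => ?_⟩
    rw [F.lowerC_eq_of_compat hNcompat]
    exact ⟨φ, hφsol, F.sol_star_mem hφsol j, r, hrI, hφω⟩
  have hsub2 : F.InvPartIn Set.univ N ⊆ F.MorseSetIn Set.univ M I := by
    rintro x ⟨hxN, φ, hφsol, hφi, hφval⟩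
    obtain ⟨r, r', hrr', hα, hω⟩ := hconn φ hφsol
    obtain ⟨z, hz⟩ := F.omega_nonempty hφsol
    have hzM : z ∈ M r := hω hz
    have hzN : z ∈ N := by
      have h0 : z ∈ F.InvPartIn Set.univ (F.upperC (φ '' {i : ℤ | ((0:ℕ):ℤ) ≤ i})) := by
        rw [MVField.omegaIn, Set.mem_iInter] at hz
        exact hz 0
      have h1 := F.invPart_subset _ _ h0
      have h2 : φ '' {i : ℤ | ((0:ℕ):ℤ) ≤ i} ⊆ N := by
        rintro w ⟨i, -, rfl⟩
        exact (hφval i).1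
      have h3 := F.upperC_mono h2 h1
      rwa [F.upperC_eq_of_compat hNcompat] at h3
    have hrI : r ∈ I := hkey r z hzM hzN
    have hr'I : r' ∈ I := hI r r' hrr' hrI
    rw [MVField.MorseSetIn]
    simp only [Set.mem_iUnion]
    exact ⟨r, hrI, r', hr'I, φ, hφsol, hφi, hα, hω⟩
  exact ⟨N, ⟨Set.subset_univ N, hNcompat, fun x _ y hy hyN => hback x y hy hyN⟩,
    subset_antisymm hsub1 hsub2⟩
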